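/- arXiv:2508.06897 — 4 statements merged into one kernel-verified Lean document; each statement's English description precedes it below -/
import Mathlib

section
/- Let X and Y be nonempty sets of real numbers such that every element of X is strictly less than every element of Y, X has no greatest element, Y has no least element, and suppose there exists n ∈ ℕ with y - x > 1/(n+1) for all x ∈ X, y ∈ Y. Then the set of real numbers a satisfying x < a < y for all x ∈ X, y ∈ Y is infinite. -/
theorem infinite_setOf_between_of_csSup_lt_csInf {α : Type*} [ConditionallyCompleteLinearOrder α]
    [DenselyOrdered α] {X Y : Set α} (hXb : BddAbove X) (hYb : BddBelow Y)
    (h : sSup X < sInf Y) :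
    {a : α | ∀ x ∈ X, ∀ y ∈ Y, x < a ∧ a < y}.Infinite :=
  (Set.Ioo_infinite h).mono fun _ ha _ hx _ hy =>
    ⟨(le_csSup hXb hx).trans_lt ha.1, ha.2.trans_le (csInf_le hYb hy)⟩

theorem csSup_add_le_csInf {X Y : Set ℝ} (hX : X.Nonempty) (hY : Y.Nonempty) {ε : ℝ}
    (h : ∀ x ∈ X, ∀ y ∈ Y, x + ε ≤ y) : sSup X + ε ≤ sInf Y :=
  le_csInf hY fun y hy =>
    le_sub_iff_add_le.1 <| csSup_le hX fun x hx => le_sub_iff_add_le.2 (h x hx y hy)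

theorem bolzano_110_case1_general (X Y : Set ℝ)
    (hX : X.Nonempty) (hY : Y.Nonempty)
    (hlt : ∀ x ∈ X, ∀ y ∈ Y, x < y)
    (hgap : ∃ n : ℕ, ∀ x ∈ X, ∀ y ∈ Y, y - x > 1 / (n + 1)) :
    {a : ℝ | ∀ x ∈ X, ∀ y ∈ Y, x < a ∧ a < y}.Infinite := by
  obtain ⟨n, hn⟩ := hgap
  have hXb : BddAbove X := hY.mono fun y hy x hx => (hlt x hx y hy).le
  have hYb : BddBelow Y := hX.mono fun x hx y hy => (hlt x hx y hy).le
  have hsep : ∀ x ∈ X, ∀ y ∈ Y, x + 1 / (n + 1) ≤ y := fun x hx y hy => by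
    linarith [hn x hx y hy]
  refine infinite_setOf_between_of_csSup_lt_csInf hXb hYb ?_
  calc sSup X < sSup X + 1 / (n + 1) := lt_add_of_pos_right _ (by positivity)
    _ ≤ sInf Y := csSup_add_le_csInf hX hY hsep

theorem bolzano_110_case1 (X Y : Set ℝ)
    (hX : X.Nonempty) (hY : Y.Nonempty)
    (hlt : ∀ x ∈ X, ∀ y ∈ Y, x < y)
    (hnomax : ∀ x ∈ X, ∃ x' ∈ X, x < x')
    (hnomin : ∀ y ∈ Y, ∃ y' ∈ Y, y' < y)
    (hgap : ∃ n : ℕ, ∀ x ∈ X, ∀ y ∈ Y, y - x > 1 / (n + 1)) :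
    {a : ℝ | ∀ x ∈ X, ∀ y ∈ Y, x < a ∧ a < y}.Infinite :=
  bolzano_110_case1_general X Y hX hY hlt hgap
end

section
/- Let X and Y be nonempty sets of real numbers such that every element of X is strictly less than every element of Y, X has no greatest element, Y has no least element, and suppose for every n ∈ ℕ there exist x ∈ X and y ∈ Y with y - x < 1/(n+1). Then there exists exactly one real number a with x < a < y for all x ∈ X, y ∈ Y. -/
/-! The supremum of `X` lies strictly between `X` and `Y`, because `X` has no greatest and `Y` no
least element. Any two points between `X` and `Y` differ by at most `y - x` for every `x ∈ X`,
`y ∈ Y`, and these gaps become arbitrarily small. -/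

section Separation

variable {α : Type*} {X Y : Set α}

theorem csSup_strictly_between [ConditionallyCompleteLinearOrder α]
    (hX : X.Nonempty) (hY : Y.Nonempty) (hlt : ∀ x ∈ X, ∀ y ∈ Y, x < y)
    (hnomax : ∀ x ∈ X, ∃ x' ∈ X, x < x') (hnomin : ∀ y ∈ Y, ∃ y' ∈ Y, y' < y) :
    ∀ x ∈ X, ∀ y ∈ Y, x < sSup X ∧ sSup X < y := by
  obtain ⟨y₀, hy₀⟩ := hY
  have hbdd : BddAbove X := ⟨y₀, fun x hx => (hlt x hx y₀ hy₀).le⟩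
  intro x hx y hy
  obtain ⟨x', hx', hxx'⟩ := hnomax x hx
  obtain ⟨y', hy', hy'y⟩ := hnomin y hy
  exact ⟨lt_csSup_of_lt hbdd hx' hxx',
    (csSup_le hX fun z hz => (hlt z hz y' hy').le).trans_lt hy'y⟩

variable [AddCommGroup α] [LinearOrder α] [IsOrderedAddMonoid α]

theorem le_of_forall_between_of_gap_lt (hgap : ∀ ε > 0, ∃ x ∈ X, ∃ y ∈ Y, y - x < ε) {a b : α}
    (ha : ∀ x ∈ X, ∀ y ∈ Y, x ≤ a ∧ a ≤ y) (hb : ∀ x ∈ X, ∀ y ∈ Y, x ≤ b ∧ b ≤ y) : a ≤ b := by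
  by_contra! hba
  obtain ⟨x, hx, y, hy, hxy⟩ := hgap (a - b) (sub_pos.mpr hba)
  have : a - b ≤ y - x := sub_le_sub (ha x hx y hy).2 (hb x hx y hy).1
  exact hxy.not_ge this

theorem eq_of_forall_between_of_gap_lt (hgap : ∀ ε > 0, ∃ x ∈ X, ∃ y ∈ Y, y - x < ε) {a b : α}
    (ha : ∀ x ∈ X, ∀ y ∈ Y, x ≤ a ∧ a ≤ y) (hb : ∀ x ∈ X, ∀ y ∈ Y, x ≤ b ∧ b ≤ y) : a = b :=
  le_antisymm (le_of_forall_between_of_gap_lt hgap ha hb)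
    (le_of_forall_between_of_gap_lt hgap hb ha)

end Separation

theorem bolzano_110_case2 (X Y : Set ℝ)
    (hX : X.Nonempty) (hY : Y.Nonempty)
    (hlt : ∀ x ∈ X, ∀ y ∈ Y, x < y)
    (hnomax : ∀ x ∈ X, ∃ x' ∈ X, x < x')
    (hnomin : ∀ y ∈ Y, ∃ y' ∈ Y, y' < y)
    (hsmall : ∀ n : ℕ, ∃ x ∈ X, ∃ y ∈ Y, y - x < 1 / (n + 1)) :
    ∃! a : ℝ, ∀ x ∈ X, ∀ y ∈ Y, x < a ∧ a < y := by
  have hgap : ∀ ε > 0, ∃ x ∈ X, ∃ y ∈ Y, y - x < ε := fun ε hε => by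
    obtain ⟨n, hn⟩ := exists_nat_one_div_lt hε
    obtain ⟨x, hx, y, hy, hxy⟩ := hsmall n
    exact ⟨x, hx, y, hy, hxy.trans hn⟩
  have hweak {c : ℝ} (hc : ∀ x ∈ X, ∀ y ∈ Y, x < c ∧ c < y) :
      ∀ x ∈ X, ∀ y ∈ Y, x ≤ c ∧ c ≤ y :=
    fun x hx y hy => (hc x hx y hy).imp le_of_lt le_of_lt
  have hsup := csSup_strictly_between hX hY hlt hnomax hnomin
  exact ⟨sSup X, hsup, fun b hb => eq_of_forall_between_of_gap_lt hgap (hweak hb) (hweak hsup)⟩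
end

section
/- Let B be a property of real numbers. Suppose there exists a real number U such that every X < U satisfies B, and there exists some X > U not satisfying B. Then there exists a real number A such that every X < A satisfies B, and for every Y, if every X < Y satisfies B then Y ≤ A. -/
section UpperBoundaries

variable {α : Type*} {P : α → Prop}

theorem bddAbove_setOf_forall_lt_of_not [LinearOrder α] {x : α} (hx : ¬ P x) :
    BddAbove {y | ∀ z < y, P z} :=
  ⟨x, fun _ hy => le_of_not_gt fun hxy => hx (hy x hxy)⟩

theorem csSup_mem_setOf_forall_lt [ConditionallyCompleteLinearOrder α]
    (hne : {y | ∀ z < y, P z}.Nonempty) : sSup {y | ∀ z < y, P z} ∈ {y | ∀ z < y, P z} := by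
  intro z hz
  obtain ⟨y, hy, hzy⟩ := exists_lt_of_lt_csSup hne hz
  exact hy z hzy

theorem isGreatest_csSup_setOf_forall_lt [ConditionallyCompleteLinearOrder α] {x : α}
    (hne : {y | ∀ z < y, P z}.Nonempty) (hx : ¬ P x) :
    IsGreatest {y | ∀ z < y, P z} (sSup {y | ∀ z < y, P z}) :=
  ⟨csSup_mem_setOf_forall_lt hne, fun _ hy => le_csSup (bddAbove_setOf_forall_lt_of_not hx) hy⟩

end UpperBoundaries

theorem bolzano_supremum_theorem (B : ℝ → Prop) (U : ℝ)
    (hU : ∀ X : ℝ, X < U → B X)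
    (hnot : ∃ X : ℝ, X > U ∧ ¬ B X) :
    ∃ A : ℝ, (∀ X : ℝ, X < A → B X) ∧ ∀ Y : ℝ, (∀ X : ℝ, X < Y → B X) → Y ≤ A := by
  obtain ⟨X₀, -, hX₀⟩ := hnot
  obtain ⟨hA, hAmax⟩ := isGreatest_csSup_setOf_forall_lt ⟨U, hU⟩ hX₀
  exact ⟨_, hA, fun _ hY => hAmax hY⟩
end

section
/- Let S = {1 - 1/2ⁿ : n ∈ ℕ} ∪ {1} ⊆ ℝ. Then for every n ∈ ℕ there exists d > 0 with d < 1/2ⁿ such that no s ∈ S satisfies |1 - s| = d. Hence S fails the Bolzano completeness condition at the point 1. -/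
theorem bolzano_PU_41_3 :
    ∀ n : ℕ, ∃ d : ℝ, 0 < d ∧ d < 1 / 2 ^ n ∧
      ∀ s ∈ ({x : ℝ | ∃ m : ℕ, x = 1 - 1 / 2 ^ m} ∪ {1} : Set ℝ), |1 - s| ≠ d := by
  intro n
  refine ⟨3 / 2 ^ (n + 2), by positivity, ?_, ?_⟩
  · rw [div_lt_div_iff₀ (by positivity) (by positivity)]
    have : (0:ℝ) < 2 ^ n := by positivity
    ring_nf
    nlinarith
  · rintro s (⟨m, rfl⟩ | rfl)
    · have h2 : (0:ℝ) < 2 ^ m := by positivity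
      rw [show (1:ℝ) - (1 - 1/2^m) = 1/2^m by ring, abs_of_pos (by positivity)]
      intro h
      rw [div_eq_div_iff (by positivity) (by positivity)] at h
      have hR : (2:ℝ) ^ (n+2) = 3 * 2 ^ m := by linarith
      have hnat : (2:ℕ) ^ (n+2) = 3 * 2 ^ m := by exact_mod_cast hR
      have hdvd : (3:ℕ) ∣ 2 ^ (n+2) := ⟨2 ^ m, hnat⟩
      have hc : Nat.Coprime 3 (2 ^ (n+2)) := Nat.Coprime.pow_right _ (by norm_num)
      have := hc.eq_one_of_dvd hdvd
      norm_num at this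
    · simp
      positivity
end
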